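/- Let h > 0, δ ∈ [0,1], and 0 ≤ τ ≤ τ_M := h/(√2·(1−δ) + δ). Then for every u : ℤ × ℤ → ℝ and every (i,j) ∈ ℤ × ℤ, the explicit dilation update u'(i,j) := u(i,j) + τ·(D u)(i,j) satisfies u(i,j) ≤ u'(i,j) ≤ max_{(a,b)∈{−1,0,1}²} u(i+a, j+b). Consequently, if m ≤ u ≤ M pointwise, then m ≤ u' ≤ M pointwise. -/

import Mathlib

/-!
Write `s := max_{N(p)} u - u p ≥ 0`. Every upwind difference occurring in `D u p` lies in
`[0, s]`, so each of the two root-sum-squares is at most `√2 s` and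
`D u p ≤ (√2 (1 - δ) + δ) s / h`. The step restriction `τ ≤ τ_M` is exactly what makes
`τ D u p ≤ s`, i.e. the update does not overshoot the neighbourhood maximum.
-/

/-- The weighted Rouy–Tourin discretisation of the dilation speed `|∇u|`. -/
noncomputable def dilationSpeed (h δ : ℝ) (u : ℤ × ℤ → ℝ) (p : ℤ × ℤ) : ℝ :=
  ((1 - δ) / h) *
      Real.sqrt
        ((max (u (p.1 + 1, p.2) - u p) (max (u (p.1 - 1, p.2) - u p) 0)) ^ 2
          + (max (u (p.1, p.2 + 1) - u p) (max (u (p.1, p.2 - 1) - u p) 0)) ^ 2)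
    + (δ / (Real.sqrt 2 * h)) *
      Real.sqrt
        ((max (u (p.1 + 1, p.2 + 1) - u p) (max (u (p.1 - 1, p.2 - 1) - u p) 0)) ^ 2
          + (max (u (p.1 - 1, p.2 + 1) - u p) (max (u (p.1 + 1, p.2 - 1) - u p) 0)) ^ 2)

/-- The set of offsets `{-1,0,1} × {-1,0,1}` describing the 3×3 neighbourhood. -/
noncomputable def offsets : Finset (ℤ × ℤ) := (Finset.Icc (-1 : ℤ) 1) ×ˢ (Finset.Icc (-1 : ℤ) 1)

lemma offsets_nonempty : offsets.Nonempty := ⟨(0, 0), by decide⟩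

lemma sqrt_sq_add_sq_le {a b s : ℝ} (ha₀ : 0 ≤ a) (ha : a ≤ s) (hb₀ : 0 ≤ b) (hb : b ≤ s) :
    √(a ^ 2 + b ^ 2) ≤ √2 * s := by
  have hs : 0 ≤ s := ha₀.trans ha
  calc √(a ^ 2 + b ^ 2) ≤ √(2 * s ^ 2) := Real.sqrt_le_sqrt (by nlinarith)
    _ = √2 * s := by rw [Real.sqrt_mul zero_le_two, Real.sqrt_sq hs]

noncomputable def neighbourhoodMax (u : ℤ × ℤ → ℝ) (p : ℤ × ℤ) : ℝ :=
  offsets.sup' offsets_nonempty fun q => u (p.1 + q.1, p.2 + q.2)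

lemma le_neighbourhoodMax (u : ℤ × ℤ → ℝ) {p q : ℤ × ℤ}
    (h₁ : |q.1 - p.1| ≤ 1) (h₂ : |q.2 - p.2| ≤ 1) : u q ≤ neighbourhoodMax u p := by
  have hmem : (q.1 - p.1, q.2 - p.2) ∈ offsets :=
    Finset.mem_product.2 ⟨Finset.mem_Icc.2 (abs_le.1 h₁), Finset.mem_Icc.2 (abs_le.1 h₂)⟩
  have := Finset.le_sup' (fun q => u (p.1 + q.1, p.2 + q.2)) hmem
  simp only [add_sub_cancel] at this
  exact this

lemma neighbourhoodMax_le {u : ℤ × ℤ → ℝ} {M : ℝ} (hM : ∀ q, u q ≤ M) (p : ℤ × ℤ) :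
    neighbourhoodMax u p ≤ M :=
  Finset.sup'_le _ _ fun _ _ => hM _

lemma upwind_le_neighbourhoodMax_sub (u : ℤ × ℤ → ℝ) {p q r : ℤ × ℤ}
    (hq₁ : |q.1 - p.1| ≤ 1) (hq₂ : |q.2 - p.2| ≤ 1)
    (hr₁ : |r.1 - p.1| ≤ 1) (hr₂ : |r.2 - p.2| ≤ 1) :
    max (u q - u p) (max (u r - u p) 0) ≤ neighbourhoodMax u p - u p := by
  have hp := le_neighbourhoodMax u (p := p) (q := p) (by simp) (by simp)
  have hq := le_neighbourhoodMax u hq₁ hq₂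
  have hr := le_neighbourhoodMax u hr₁ hr₂
  exact max_le (by linarith) (max_le (by linarith) (by linarith))

lemma dilationSpeed_nonneg {h δ : ℝ} (hh : 0 ≤ h) (hδ : δ ∈ Set.Icc (0 : ℝ) 1)
    (u : ℤ × ℤ → ℝ) (p : ℤ × ℤ) : 0 ≤ dilationSpeed h δ u p := by
  have := hδ.1
  have : 0 ≤ 1 - δ := sub_nonneg.2 hδ.2
  unfold dilationSpeed
  positivity

lemma dilationSpeed_le {h δ : ℝ} (hh : 0 ≤ h) (hδ : δ ∈ Set.Icc (0 : ℝ) 1)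
    (u : ℤ × ℤ → ℝ) (p : ℤ × ℤ) :
    dilationSpeed h δ u p ≤ (√2 * (1 - δ) + δ) / h * (neighbourhoodMax u p - u p) := by
  have hmax : ∀ x y : ℝ, 0 ≤ max x (max y 0) := fun _ _ => le_max_of_le_right (le_max_right _ _)
  have hc₁ : 0 ≤ (1 - δ) / h := div_nonneg (sub_nonneg.2 hδ.2) hh
  have hc₂ : 0 ≤ δ / (√2 * h) := div_nonneg hδ.1 (by positivity)
  calc dilationSpeed h δ u p
      ≤ (1 - δ) / h * (√2 * (neighbourhoodMax u p - u p))
        + δ / (√2 * h) * (√2 * (neighbourhoodMax u p - u p)) := by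
        refine add_le_add (mul_le_mul_of_nonneg_left ?_ hc₁) (mul_le_mul_of_nonneg_left ?_ hc₂)
        all_goals
          refine sqrt_sq_add_sq_le (hmax _ _) (upwind_le_neighbourhoodMax_sub u ?_ ?_ ?_ ?_)
            (hmax _ _) (upwind_le_neighbourhoodMax_sub u ?_ ?_ ?_ ?_) <;> simp
    _ = (√2 * (1 - δ) + δ) / h * (neighbourhoodMax u p - u p) := by
        have : √2 ≠ 0 := by positivity
        simp only [div_eq_mul_inv, mul_inv]
        field_simp

lemma dilationUpdate_mem_Icc {h δ τ : ℝ} (hh : 0 < h) (hδ : δ ∈ Set.Icc (0 : ℝ) 1)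
    (hτ₀ : 0 ≤ τ) (hτ : τ ≤ h / (√2 * (1 - δ) + δ)) (u : ℤ × ℤ → ℝ) (p : ℤ × ℤ) :
    u p + τ * dilationSpeed h δ u p ∈ Set.Icc (u p) (neighbourhoodMax u p) := by
  have hD := dilationSpeed_nonneg hh.le hδ u p
  refine ⟨le_add_of_nonneg_right (mul_nonneg hτ₀ hD), ?_⟩
  have hK : 0 < √2 * (1 - δ) + δ := by
    have : 1 ≤ √2 := Real.one_le_sqrt.2 one_le_two
    nlinarith [hδ.1, hδ.2]
  have hCFL : τ * dilationSpeed h δ u p ≤ neighbourhoodMax u p - u p :=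
    calc τ * dilationSpeed h δ u p
        ≤ h / (√2 * (1 - δ) + δ) * ((√2 * (1 - δ) + δ) / h * (neighbourhoodMax u p - u p)) :=
          mul_le_mul hτ (dilationSpeed_le hh.le hδ u p) hD (by positivity)
      _ = neighbourhoodMax u p - u p := by field_simp
  linarith

theorem dilation_update_bounds
    (h δ τ : ℝ) (hh : 0 < h) (hδ : δ ∈ Set.Icc (0 : ℝ) 1)
    (hτ0 : 0 ≤ τ) (hτ : τ ≤ h / (Real.sqrt 2 * (1 - δ) + δ))
    (u : ℤ × ℤ → ℝ) :
    (∀ p : ℤ × ℤ,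
        u p ≤ u p + τ * dilationSpeed h δ u p ∧
          u p + τ * dilationSpeed h δ u p
            ≤ offsets.sup' offsets_nonempty (fun q => u (p.1 + q.1, p.2 + q.2))) ∧
      (∀ m M : ℝ, (∀ p, m ≤ u p ∧ u p ≤ M) →
        ∀ p, m ≤ u p + τ * dilationSpeed h δ u p ∧ u p + τ * dilationSpeed h δ u p ≤ M) := by
  have hupdate := dilationUpdate_mem_Icc hh hδ hτ0 hτ u
  refine ⟨hupdate, fun m M hmM p => ?_⟩
  obtain ⟨hlower, hupper⟩ := hupdate p
  exact ⟨(hmM p).1.trans hlower, hupper.trans (neighbourhoodMax_le (fun q => (hmM q).2) p)⟩
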